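/- arXiv:2401.06566 — 2 statements merged into one kernel-verified Lean document; each statement's English description precedes it below -/
import Mathlib

section
/- Given a probability measure ν on X × A with ν^X(x) > 0 for all x, define the policy π_ν(a|x) = ν(x,a)/ν^X(x). If ν satisfies the stationarity conditions ν^X(x) = ∑_{(y,a)} p(x|y,a) π_ν(a|y) ν^X(y) and ν^X = μ_E, and the chain starts from μ_E, then the occupation measure induced by π_ν equals ν: ν_{π_ν} = ν. -/
open scoped BigOperators

/-- The law of the state `x(t)` of the Markov chain with transition kernel
`p` (where `p y a x` is the probability of moving to `x` from `y` under action `a`),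
stationary policy `π` and initial distribution `μ0`. -/
noncomputable def stateLaw {X A : Type*} [Fintype X] [Fintype A]
    (p : X → A → X → ℝ) (π : X → A → ℝ) (μ0 : X → ℝ) : ℕ → X → ℝ
  | 0 => μ0
  | (t + 1) => fun x => ∑ y, ∑ a, p y a x * π y a * stateLaw p π μ0 t y

/-- The law of the state-action pair `(x(t), a(t))`. -/
noncomputable def jointLaw {X A : Type*} [Fintype X] [Fintype A]
    (p : X → A → X → ℝ) (π : X → A → ℝ) (μ0 : X → ℝ) (t : ℕ) (x : X) (a : A) : ℝ :=
  π x a * stateLaw p π μ0 t x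

/-- The normalized discounted state-action occupation measure
`ν_π(x,a) = (1−β) ∑_{t≥0} β^t P[(x(t),a(t)) = (x,a)]`. -/
noncomputable def occ {X A : Type*} [Fintype X] [Fintype A]
    (β : ℝ) (p : X → A → X → ℝ) (π : X → A → ℝ) (μ0 : X → ℝ) (x : X) (a : A) : ℝ :=
  (1 - β) * ∑' t : ℕ, β ^ t * jointLaw p π μ0 t x a

/-!
Stationarity of `μ_E` under `π_ν` makes every state law of the chain equal to `μ_E`, so every
joint law equals `π_ν(a|x) μ_E(x) = ν(x,a)`; the discounted average of a constant sequence is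
that constant.
-/

def IsStationaryLaw {X A : Type*} [Fintype X] [Fintype A]
    (p : X → A → X → ℝ) (π : X → A → ℝ) (μ : X → ℝ) : Prop :=
  ∀ x, ∑ y, ∑ a, p y a x * π y a * μ y = μ x

section Stationary

variable {X A : Type*} [Fintype X] [Fintype A]
  {p : X → A → X → ℝ} {π : X → A → ℝ} {μ : X → ℝ}

theorem IsStationaryLaw.stateLaw_eq (hμ : IsStationaryLaw p π μ) (t : ℕ) :
    stateLaw p π μ t = μ := by
  induction t with
  | zero => rfl
  | succ t ih =>
    funext x
    simp only [stateLaw, ih]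
    exact hμ x

theorem IsStationaryLaw.occ_eq {β : ℝ} (hβ0 : 0 ≤ β) (hβ1 : β < 1)
    (hμ : IsStationaryLaw p π μ) (x : X) (a : A) :
    occ β p π μ x a = π x a * μ x := by
  simp only [occ, jointLaw, hμ.stateLaw_eq]
  rw [tsum_mul_right, tsum_geometric_of_lt_one hβ0 hβ1, ← mul_assoc,
    mul_inv_cancel₀ (sub_ne_zero.mpr hβ1.ne'), one_mul]

end Stationary

theorem occ_of_disintegrated_policy_eq_general
    {X A : Type*} [Fintype X] [Fintype A]
    (β : ℝ) (hβ0 : 0 < β) (hβ1 : β < 1)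
    (p : X → A → X → ℝ)
    (μE : X → ℝ)
    (ν : X → A → ℝ)
    (hmargpos : ∀ x, 0 < ∑ a, ν x a)
    (πν : X → A → ℝ) (hπν : ∀ x a, πν x a = ν x a / ∑ b, ν x b)
    (hstat : ∀ x, ∑ a, ν x a = ∑ y, ∑ a, p y a x * πν y a * (∑ b, ν y b))
    (hmarg : ∀ x, ∑ a, ν x a = μE x) :
    ∀ x a, occ β p πν μE x a = ν x a := by
  have hμE : IsStationaryLaw p πν μE := fun x => by
    simpa only [hmarg] using (hstat x).symm
  intro x a
  rw [hμE.occ_eq hβ0.le hβ1, hπν, ← hmarg, div_mul_cancel₀ _ (hmargpos x).ne']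

/-- given a probability measure `ν` on `X × A` with positive state marginal,
the policy `π_ν(a|x) = ν(x,a)/ν^X(x)`, under the stationarity conditions
`ν^X(x) = ∑_{(y,a)} p(x|y,a) π_ν(a|y) ν^X(y)` and `ν^X = μ_E`, induces (starting from
`μ_E`) an occupation measure equal to `ν`. -/
theorem occ_of_disintegrated_policy_eq
    {X A : Type*} [Fintype X] [Fintype A]
    (β : ℝ) (hβ0 : 0 < β) (hβ1 : β < 1)
    (p : X → A → X → ℝ) (hp0 : ∀ y a x, 0 ≤ p y a x) (hp1 : ∀ y a, ∑ x, p y a x = 1)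
    (μE : X → ℝ) (hμ0 : ∀ x, 0 ≤ μE x) (hμ1 : ∑ x, μE x = 1)
    (ν : X → A → ℝ) (hν0 : ∀ x a, 0 ≤ ν x a) (hν1 : ∑ x, ∑ a, ν x a = 1)
    (hmargpos : ∀ x, 0 < ∑ a, ν x a)
    (πν : X → A → ℝ) (hπν : ∀ x a, πν x a = ν x a / ∑ b, ν x b)
    (hstat : ∀ x, ∑ a, ν x a = ∑ y, ∑ a, p y a x * πν y a * (∑ b, ν y b))
    (hmarg : ∀ x, ∑ a, ν x a = μE x) :
    ∀ x a, occ β p πν μE x a = ν x a :=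
  occ_of_disintegrated_policy_eq_general β hβ0 hβ1 p μE ν hmargpos πν hπν hstat hmarg
end

section
/- If g : ℝ^m → ℝ is convex and L-smooth (has L-Lipschitz gradient), then gradient descent with constant step size γ ∈ (0, 1/L] starting at z₀ satisfies, for every k ≥ 1, g(z_k) − g(z*) ≤ ‖z₀ − z*‖² / (2γk), where z* is any minimizer, and the iterates remain in the ball {z : ‖z − z*‖ ≤ ‖z₀ − z*‖}. -/
/-!
The `L`-Lipschitz gradient gives the quadratic upper bound
`g y ≤ g x + ⟪∇g x, y - x⟫ + L/2 ‖y - x‖²`, so a step with `γL ≤ 1` decreases `g` by at least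
`γ/2 ‖∇g x‖²`. Adding the first-order convexity bound `g x - g z* ≤ ⟪∇g x, x - z*⟫` and expanding
`‖x - γ∇g x - z*‖²` yields `2γ (g z_{k+1} - g z*) ≤ ‖z_k - z*‖² - ‖z_{k+1} - z*‖²`. Since `z*` is a
minimizer the left side is nonnegative, so the distances to `z*` decrease; summing the inequality
and using that `g z_k` decreases gives `2γk (g z_k - g z*) ≤ ‖z₀ - z*‖²`.
-/

open scoped RealInnerProductSpace

open AffineMap

variable {E : Type*} [NormedAddCommGroup E] [InnerProductSpace ℝ E] [CompleteSpace E]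
  {g : E → ℝ} {G : E → E}

theorem HasGradientAt.hasDerivAt_comp_lineMap {g' x y : E} {t : ℝ}
    (h : HasGradientAt g g' (lineMap x y t)) :
    HasDerivAt (g ∘ lineMap x y) ⟪g', y - x⟫ t := by
  have := (hasGradientAt_iff_hasFDerivAt.mp h).comp_hasDerivAt t hasDerivAt_lineMap
  simpa [InnerProductSpace.toDual_apply_apply] using this

theorem ConvexOn.inner_le_sub_of_hasGradientAt {g' x : E} (hconv : ConvexOn ℝ Set.univ g)
    (hg : HasGradientAt g g' x) (y : E) :
    ⟪g', y - x⟫ ≤ g y - g x := by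
  have hline : ConvexOn ℝ Set.univ (g ∘ lineMap x y) := hconv.comp_affineMap (lineMap x y)
  have := hline.le_slope_of_hasDerivAt (Set.mem_univ 0) (Set.mem_univ 1) zero_lt_one
    (HasGradientAt.hasDerivAt_comp_lineMap (t := 0) (by rwa [lineMap_apply_zero]))
  simpa [slope_def_field] using this

theorem le_add_inner_add_sq_of_lipschitz_gradient (hgrad : ∀ x, HasGradientAt g (G x) x)
    {L : ℝ} (hLip : ∀ u v, ‖G u - G v‖ ≤ L * ‖u - v‖) (x y : E) :
    g y ≤ g x + ⟪G x, y - x⟫ + L / 2 * ‖y - x‖ ^ 2 := by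
  set v := y - x
  have hderiv_le : ∀ t, 0 ≤ t → ⟪G (lineMap x y t), v⟫ ≤ ⟪G x, v⟫ + L * t * ‖v‖ ^ 2 := by
    intro t ht
    have hdist : ‖lineMap x y t - x‖ = t * ‖v‖ := by
      rw [lineMap_apply_module', add_sub_cancel_right, norm_smul, Real.norm_of_nonneg ht]
    calc ⟪G (lineMap x y t), v⟫ = ⟪G x, v⟫ + ⟪G (lineMap x y t) - G x, v⟫ := by
          rw [inner_sub_left]; ring
      _ ≤ ⟪G x, v⟫ + ‖G (lineMap x y t) - G x‖ * ‖v‖ := by gcongr; exact real_inner_le_norm _ _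
      _ ≤ ⟪G x, v⟫ + L * (t * ‖v‖) * ‖v‖ := by gcongr; exact hdist ▸ hLip _ _
      _ = ⟪G x, v⟫ + L * t * ‖v‖ ^ 2 := by ring
  -- the gap between the quadratic model and `g` along the segment vanishes at `0` and grows
  set ψ : ℝ → ℝ := fun t => g x + t * ⟪G x, v⟫ + L / 2 * t ^ 2 * ‖v‖ ^ 2 - g (lineMap x y t)
  have hψ : ∀ t, HasDerivAt ψ (⟪G x, v⟫ + L * t * ‖v‖ ^ 2 - ⟪G (lineMap x y t), v⟫) t := by
    intro t
    have hquad : HasDerivAt (fun t : ℝ => g x + t * ⟪G x, v⟫ + L / 2 * t ^ 2 * ‖v‖ ^ 2)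
        (⟪G x, v⟫ + L * t * ‖v‖ ^ 2) t := by
      refine ((((hasDerivAt_id' t).mul_const ⟪G x, v⟫).const_add (g x)).add
        (((hasDerivAt_pow 2 t).const_mul (L / 2)).mul_const (‖v‖ ^ 2))).congr_deriv ?_
      ring
    exact hquad.sub (hgrad _).hasDerivAt_comp_lineMap
  have hmono : MonotoneOn ψ (Set.Icc 0 1) := by
    refine monotoneOn_of_hasDerivWithinAt_nonneg (convex_Icc 0 1)
      (fun t _ => (hψ t).continuousAt.continuousWithinAt) (fun t _ => (hψ t).hasDerivWithinAt) ?_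
    intro t ht
    rw [interior_Icc] at ht
    exact sub_nonneg.mpr (hderiv_le t ht.1.le)
  have := hmono (Set.left_mem_Icc.mpr zero_le_one) (Set.right_mem_Icc.mpr zero_le_one) zero_le_one
  simp only [ψ, lineMap_apply_zero, lineMap_apply_one] at this
  linarith

theorem apply_sub_smul_le_of_lipschitz_gradient (hgrad : ∀ x, HasGradientAt g (G x) x)
    {L : ℝ} (hLip : ∀ u v, ‖G u - G v‖ ≤ L * ‖u - v‖) {γ : ℝ} (hγ0 : 0 ≤ γ) (hγL : γ * L ≤ 1)
    (x : E) :
    g (x - γ • G x) ≤ g x - γ / 2 * ‖G x‖ ^ 2 := by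
  have h := le_add_inner_add_sq_of_lipschitz_gradient hgrad hLip x (x - γ • G x)
  rw [sub_sub_cancel_left, inner_neg_right, real_inner_smul_right, real_inner_self_eq_norm_sq,
    norm_neg, norm_smul, Real.norm_of_nonneg hγ0] at h
  linarith [mul_le_mul_of_nonneg_left hγL (mul_nonneg hγ0 (sq_nonneg ‖G x‖))]

theorem two_mul_apply_sub_smul_sub_le (hgrad : ∀ x, HasGradientAt g (G x) x)
    (hconv : ConvexOn ℝ Set.univ g) {L : ℝ} (hLip : ∀ u v, ‖G u - G v‖ ≤ L * ‖u - v‖) {γ : ℝ}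
    (hγ0 : 0 ≤ γ) (hγL : γ * L ≤ 1) (x y : E) :
    2 * γ * (g (x - γ • G x) - g y) ≤ ‖x - y‖ ^ 2 - ‖x - γ • G x - y‖ ^ 2 := by
  have hdescent := apply_sub_smul_le_of_lipschitz_gradient hgrad hLip hγ0 hγL x
  have hconvex := hconv.inner_le_sub_of_hasGradientAt (hgrad x) y
  have hexpand : ‖x - γ • G x - y‖ ^ 2 =
      ‖x - y‖ ^ 2 - 2 * γ * ⟪G x, x - y⟫ + γ ^ 2 * ‖G x‖ ^ 2 := by
    rw [sub_right_comm, norm_sub_sq_real, real_inner_smul_right, norm_smul,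
      Real.norm_of_nonneg hγ0, real_inner_comm]
    ring
  have hflip : ⟪G x, y - x⟫ = -⟪G x, x - y⟫ := by rw [← inner_neg_right, neg_sub]
  have hgap : g (x - γ • G x) - g y ≤ ⟪G x, x - y⟫ - γ / 2 * ‖G x‖ ^ 2 := by linarith
  rw [hexpand]
  linarith [mul_le_mul_of_nonneg_left hgap hγ0]

theorem natCast_mul_le_sub_of_antitone {a d : ℕ → ℝ} (ha : Antitone a)
    (had : ∀ k, a (k + 1) ≤ d k - d (k + 1)) (k : ℕ) :
    k * a k ≤ d 0 - d k := by
  induction k with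
  | zero => simp
  | succ k ih =>
    have := mul_le_mul_of_nonneg_left (ha k.le_succ) k.cast_nonneg
    push_cast
    linarith [had k]

theorem gradient_descent_convex_rate_general
    {m : ℕ} (g : EuclideanSpace ℝ (Fin m) → ℝ)
    (G : EuclideanSpace ℝ (Fin m) → EuclideanSpace ℝ (Fin m))
    (hgrad : ∀ x, HasGradientAt g (G x) x)
    (hconv : ConvexOn ℝ Set.univ g)
    (L : ℝ) (hLip : ∀ u v, ‖G u - G v‖ ≤ L * ‖u - v‖)
    (zstar : EuclideanSpace ℝ (Fin m)) (hmin : ∀ u, g zstar ≤ g u)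
    (γ : ℝ) (hγ0 : 0 < γ) (hγL : γ ≤ 1 / L)
    (z : ℕ → EuclideanSpace ℝ (Fin m))
    (hiter : ∀ k, z (k + 1) = z k - γ • G (z k)) :
    (∀ k : ℕ, 1 ≤ k → g (z k) - g zstar ≤ ‖z 0 - zstar‖ ^ 2 / (2 * γ * k)) ∧
    (∀ k : ℕ, ‖z k - zstar‖ ≤ ‖z 0 - zstar‖) := by
  have hγL' : γ * L ≤ 1 := (le_div_iff₀ (one_div_pos.mp (hγ0.trans_le hγL))).mp hγL
  have hstep : ∀ k, 2 * γ * (g (z (k + 1)) - g zstar) ≤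
      ‖z k - zstar‖ ^ 2 - ‖z (k + 1) - zstar‖ ^ 2 := fun k => by
    rw [hiter]; exact two_mul_apply_sub_smul_sub_le hgrad hconv hLip hγ0.le hγL' _ _
  have hvalue : Antitone fun k => 2 * γ * (g (z k) - g zstar) := by
    refine antitone_nat_of_succ_le fun k => ?_
    have := apply_sub_smul_le_of_lipschitz_gradient hgrad hLip hγ0.le hγL' (z k)
    rw [← hiter] at this
    have hdecr : g (z (k + 1)) ≤ g (z k) := this.trans (sub_le_self _ (by positivity))
    gcongr
  have hdist : Antitone fun k => ‖z k - zstar‖ := by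
    refine antitone_nat_of_succ_le fun k => ?_
    refine (pow_le_pow_iff_left₀ (norm_nonneg _) (norm_nonneg _) two_ne_zero).mp ?_
    linarith [hstep k, mul_nonneg (by positivity : 0 ≤ 2 * γ) (sub_nonneg.mpr (hmin (z (k + 1))))]
  refine ⟨fun k hk => ?_, fun k => hdist k.zero_le⟩
  have hsum := natCast_mul_le_sub_of_antitone hvalue hstep k
  have hk : (0 : ℝ) < k := by exact_mod_cast hk
  rw [le_div_iff₀ (by positivity)]
  linarith [sq_nonneg ‖z k - zstar‖]

/-- if `g` is convex and `L`-smooth (differentiable with `L`-Lipschitz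
gradient `G`) and `z*` is a minimizer, then gradient descent with constant step size
`γ ∈ (0, 1/L]` satisfies `g(z_k) − g(z*) ≤ ‖z₀ − z*‖² / (2γk)` for every `k ≥ 1`, and
the iterates remain in the ball `{z : ‖z − z*‖ ≤ ‖z₀ − z*‖}`. -/
theorem gradient_descent_convex_rate
    {m : ℕ} (g : EuclideanSpace ℝ (Fin m) → ℝ)
    (G : EuclideanSpace ℝ (Fin m) → EuclideanSpace ℝ (Fin m))
    (hgrad : ∀ x, HasGradientAt g (G x) x)
    (hconv : ConvexOn ℝ Set.univ g)
    (L : ℝ) (hL : 0 < L) (hLip : ∀ u v, ‖G u - G v‖ ≤ L * ‖u - v‖)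
    (zstar : EuclideanSpace ℝ (Fin m)) (hmin : ∀ u, g zstar ≤ g u)
    (γ : ℝ) (hγ0 : 0 < γ) (hγL : γ ≤ 1 / L)
    (z : ℕ → EuclideanSpace ℝ (Fin m))
    (hiter : ∀ k, z (k + 1) = z k - γ • G (z k)) :
    (∀ k : ℕ, 1 ≤ k → g (z k) - g zstar ≤ ‖z 0 - zstar‖ ^ 2 / (2 * γ * k)) ∧
    (∀ k : ℕ, ‖z k - zstar‖ ≤ ‖z 0 - zstar‖) :=
  gradient_descent_convex_rate_general g G hgrad hconv L hLip zstar hmin γ hγ0 hγL z hiter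
end
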